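/- Smallness of the test-function contribution (estimate (3.6)): Let g satisfy condition (1.3) with constants 1 < p_g ≤ q_g, let 0 < s < 1, n ≥ 1, x̃ ∈ ℝⁿ, 0 < Λ, and let K:ℝⁿ×ℝⁿ→(0,∞] satisfy K(x,y) ≤ Λ|x−y|^{−n}. Let β > s + s/p_g (equivalently β > sp/(p−1) with p = p_g+1). Then for all 0 < ε < 1 and 0 < r ≤ 1: ∫_{B_r(x̃)} g( ε|y−x̃|^{β}/|y−x̃|^{s} ) K(x̃,y) |y−x̃|^{−s} dy ≤ (g(1) Λ q_g / p_g) · ε · r^{(β−s)p_g − s} / ((β−s)p_g − s) · ω, where ω is the surface measure of the unit sphere in ℝⁿ; in particular this integral tends to 0 as ε → 0. -/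

import Mathlib

open Set Filter Topology Metric MeasureTheory

noncomputable section

abbrev Eucl (n : ℕ) : Type := EuclideanSpace ℝ (Fin n)

/-! Condition (1.3) makes `t ↦ g t * t ^ (-p_g)` nondecreasing, so `g t ≤ g 1 * t ^ p_g` on
`(0, 1]`. With `ρ = ‖y - x̃‖ < 1` and `ε ≤ 1` the integrand is therefore at most
`g 1 * Λ * ε * ρ ^ (a - n)` with `a = (β - s) * p_g - s`, and `a > 0` is exactly the condition
`β > s + s / p_g`; in polar coordinates `∫_{B_r} ρ ^ (a - n) = n |B₁| r ^ a / a`. -/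

theorem apply_le_apply_one_mul_rpow {g : ℝ → ℝ} {p : ℝ}
    (hdiff : ∀ t : ℝ, 0 < t → DifferentiableAt ℝ g t)
    (hlow : ∀ t : ℝ, 0 < t → p * g t ≤ t * deriv g t) {t : ℝ} (ht : 0 < t) (ht1 : t ≤ 1) :
    g t ≤ g 1 * t ^ p := by
  have hderiv : ∀ u ∈ Ioi (0 : ℝ), HasDerivAt (fun u => g u * u ^ (-p))
      (u ^ (-p - 1) * (u * deriv g u - p * g u)) u := by
    intro u (hu : 0 < u)
    refine ((hdiff u hu).hasDerivAt.mul
      (Real.hasDerivAt_rpow_const (p := -p) (Or.inl hu.ne'))).congr_deriv ?_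
    rw [Real.rpow_sub_one hu.ne']
    field_simp
    ring
  have hmono : MonotoneOn (fun u => g u * u ^ (-p)) (Ioi 0) :=
    monotoneOn_of_hasDerivWithinAt_nonneg (convex_Ioi 0)
      (fun u hu => (hderiv u hu).continuousAt.continuousWithinAt)
      (fun u hu => (hderiv u (interior_subset hu)).hasDerivWithinAt)
      (fun u hu => mul_nonneg (Real.rpow_nonneg (interior_subset hu).le _)
        (sub_nonneg.2 (hlow u (interior_subset hu))))
  have h := hmono ht (mem_Ioi.2 one_pos) ht1
  simp only at h
  rw [Real.one_rpow, mul_one, Real.rpow_neg ht.le, ← div_eq_mul_inv,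
    div_le_iff₀ (by positivity)] at h
  exact h

theorem test_integrand_le_mul_rpow {g : ℝ → ℝ} {p s β ε ρ k L : ℝ} {d : ℕ}
    (hg : ∀ t, 0 < t → t ≤ 1 → g t ≤ g 1 * t ^ p) (hg1 : 0 ≤ g 1) (hp : 1 ≤ p) (hsβ : s ≤ β)
    (hε : 0 < ε) (hε1 : ε ≤ 1) (hρ : 0 < ρ) (hρ1 : ρ ≤ 1) (hk0 : 0 ≤ k) (hk : k ≤ L / ρ ^ d) :
    g (ε * ρ ^ β / ρ ^ s) * k / ρ ^ s ≤ g 1 * L * ε * ρ ^ ((β - s) * p - s - d) := by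
  have hL : 0 ≤ L := by
    have := hk0.trans hk
    rwa [le_div_iff₀ (by positivity), zero_mul] at this
  have harg : ε * ρ ^ β / ρ ^ s = ε * ρ ^ (β - s) := by
    rw [mul_div_assoc, ← Real.rpow_sub hρ]
  have ht1 : ε * ρ ^ (β - s) ≤ 1 :=
    mul_le_one₀ hε1 (by positivity) (Real.rpow_le_one hρ.le hρ1 (sub_nonneg.2 hsβ))
  have hpow : (ε * ρ ^ (β - s)) ^ p * (L / ρ ^ d) / ρ ^ s =
      ε ^ p * L * ρ ^ ((β - s) * p - s - d) := by
    rw [Real.mul_rpow hε.le (by positivity), ← Real.rpow_mul hρ.le, Real.rpow_sub hρ,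
      Real.rpow_sub hρ, Real.rpow_natCast]
    field_simp
  calc g (ε * ρ ^ β / ρ ^ s) * k / ρ ^ s
      ≤ g 1 * (ε * ρ ^ (β - s)) ^ p * (L / ρ ^ d) / ρ ^ s := by
        rw [harg]
        gcongr
        exact hg _ (by positivity) ht1
    _ = g 1 * (ε ^ p * L * ρ ^ ((β - s) * p - s - d)) := by rw [← hpow]; ring
    _ ≤ g 1 * (ε * L * ρ ^ ((β - s) * p - s - d)) := by
        gcongr
        exact Real.rpow_le_self_of_le_one hε.le hε1 hp
    _ = g 1 * L * ε * ρ ^ ((β - s) * p - s - d) := by ring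

theorem preimage_sub_right_ball {E : Type*} [SeminormedAddCommGroup E] (x : E) (r : ℝ) :
    (· - x) ⁻¹' ball (0 : E) r = ball x r := by
  ext y; simp [dist_eq_norm]

section HaarBall

open Module

variable {E : Type*} [NormedAddCommGroup E] [NormedSpace ℝ E] [FiniteDimensional ℝ E]
  [Nontrivial E] [MeasurableSpace E] [BorelSpace E] (μ : Measure E) [μ.IsAddHaarMeasure]

theorem integrableOn_norm_sub_rpow_ball {a : ℝ} (ha : 0 < a) (x : E) (r : ℝ) :
    IntegrableOn (fun y => ‖y - x‖ ^ (a - finrank ℝ E)) (ball x r) μ := by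
  have h0 : IntegrableOn (fun y : E => ‖y‖ ^ (a - finrank ℝ E)) (ball 0 r) μ :=
    integrableOn_ball_of_norm_le_rpow (C := 1) (α := finrank ℝ E - a) finrank_pos (by linarith)
      (ae_of_all _ fun y => by simp [abs_of_nonneg (Real.rpow_nonneg (norm_nonneg y) _)])
      (measurable_norm.pow_const _).aestronglyMeasurable
  rw [← preimage_sub_right_ball]
  exact ((measurePreserving_sub_right μ x).integrableOn_comp_preimage
    (measurableEmbedding_subRight x)).2 h0

theorem setIntegral_norm_rpow_ball {a : ℝ} (ha : 0 < a) {r : ℝ} (hr : 0 ≤ r) :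
    ∫ y in ball (0 : E) r, ‖y‖ ^ (a - finrank ℝ E) ∂μ =
      finrank ℝ E * μ.real (ball 0 1) * (r ^ a / a) := by
  have hradial : ∫ y in ball (0 : E) r, ‖y‖ ^ (a - finrank ℝ E) ∂μ =
      ∫ y, (Iio r).indicator (· ^ (a - finrank ℝ E)) ‖y‖ ∂μ := by
    rw [← integral_indicator measurableSet_ball]
    congr 1; ext y; simp [indicator]
  have hpolar : ∫ t in Ioi (0 : ℝ),
      t ^ (finrank ℝ E - 1) • (Iio r).indicator (· ^ (a - finrank ℝ E)) t =
      ∫ t in (0)..r, t ^ (a - 1) := by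
    have hpow : ∀ t ∈ Ioi (0 : ℝ),
        t ^ (finrank ℝ E - 1) • (Iio r).indicator (· ^ (a - finrank ℝ E)) t =
        (Iio r).indicator (· ^ (a - 1)) t := by
      intro t (ht : 0 < t)
      by_cases htr : t < r
      · simp only [indicator_of_mem (mem_Iio.2 htr), smul_eq_mul]
        rw [← Real.rpow_natCast, ← Real.rpow_add ht, Nat.cast_sub finrank_pos, Nat.cast_one]
        ring_nf
      · simp [htr]
    rw [setIntegral_congr_fun measurableSet_Ioi hpow, setIntegral_indicator measurableSet_Iio,
      Ioi_inter_Iio, intervalIntegral.integral_of_le hr, integral_Ioc_eq_integral_Ioo]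
  rw [hradial, integral_fun_norm_addHaar, hpolar, integral_rpow (by simp [ha]), sub_add_cancel,
    Real.zero_rpow ha.ne', nsmul_eq_mul, smul_eq_mul]
  ring

theorem setIntegral_norm_sub_rpow_ball {a : ℝ} (ha : 0 < a) (x : E) {r : ℝ} (hr : 0 ≤ r) :
    ∫ y in ball x r, ‖y - x‖ ^ (a - finrank ℝ E) ∂μ =
      finrank ℝ E * μ.real (ball 0 1) * (r ^ a / a) := by
  rw [← preimage_sub_right_ball, (measurePreserving_sub_right μ x).setIntegral_preimage_emb
    (measurableEmbedding_subRight x) (fun y => ‖y‖ ^ (a - finrank ℝ E)),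
    setIntegral_norm_rpow_ball μ ha hr]

theorem setIntegral_test_function_le {g : ℝ → ℝ} {k : E → ℝ} {p s β ε r L : ℝ} {x : E}
    (hg : ∀ t, 0 < t → t ≤ 1 → g t ≤ g 1 * t ^ p) (hg0 : ∀ t, 0 ≤ t → 0 ≤ g t) (hp : 1 ≤ p)
    (hsβ : s ≤ β) (ha : 0 < (β - s) * p - s)
    (hk0 : ∀ y, 0 ≤ k y) (hk : ∀ y, y ≠ x → k y ≤ L / ‖y - x‖ ^ finrank ℝ E)
    (hε : 0 < ε) (hε1 : ε ≤ 1) (hr : 0 ≤ r) (hr1 : r ≤ 1) :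
    ∫ y in ball x r, g (ε * ‖y - x‖ ^ β / ‖y - x‖ ^ s) * k y / ‖y - x‖ ^ s ∂μ ≤
      g 1 * L * ε *
        (finrank ℝ E * μ.real (ball 0 1) * (r ^ ((β - s) * p - s) / ((β - s) * p - s))) := by
  have hle : ∀ᵐ y ∂μ.restrict (ball x r),
      g (ε * ‖y - x‖ ^ β / ‖y - x‖ ^ s) * k y / ‖y - x‖ ^ s ≤
        g 1 * L * ε * ‖y - x‖ ^ ((β - s) * p - s - finrank ℝ E) := by
    filter_upwards [ae_restrict_mem measurableSet_ball,
      ae_restrict_of_ae (compl_mem_ae_iff.2 (measure_singleton x))] with y hyr (hyx : y ≠ x)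
    exact test_integrand_le_mul_rpow hg (hg0 1 zero_le_one) hp hsβ hε hε1
      (norm_pos_iff.2 (sub_ne_zero.2 hyx)) ((mem_ball_iff_norm.1 hyr).le.trans hr1) (hk0 y)
      (hk y hyx)
  calc _ ≤ ∫ y in ball x r, g 1 * L * ε * ‖y - x‖ ^ ((β - s) * p - s - finrank ℝ E) ∂μ :=
        integral_mono_of_nonneg
          (ae_of_all _ fun y => div_nonneg (mul_nonneg (hg0 _ (by positivity)) (hk0 y))
            (by positivity))
          ((integrableOn_norm_sub_rpow_ball μ ha x r).const_mul _) hle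
    _ = _ := by rw [integral_const_mul, setIntegral_norm_sub_rpow_ball μ ha x hr]

end HaarBall

theorem test_function_smallness_general
    (n : ℕ) (hn : 1 ≤ n) (s : ℝ) (hs0 : 0 < s)
    (g : ℝ → ℝ) (pg qg : ℝ) (hpg : 1 < pg) (hpq : pg ≤ qg)
    (hmono : StrictMonoOn g (Ici 0)) (hzero : g 0 = 0)
    (hdiff : ∀ t : ℝ, 0 < t → DifferentiableAt ℝ g t)
    (hlow : ∀ t : ℝ, 0 < t → pg * g t ≤ t * deriv g t)
    (x' : Eucl n) (Lam : ℝ)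
    (K : Eucl n → Eucl n → ℝ) (hKpos : ∀ x y, 0 ≤ K x y)
    (hKupper : ∀ x y : Eucl n, x ≠ y → K x y ≤ Lam / ‖x - y‖ ^ n)
    (β : ℝ) (hβ : s + s / pg < β) :
    (∀ ε r : ℝ, 0 < ε → ε < 1 → 0 < r → r ≤ 1 →
      (∫ y in ball x' r,
          g (ε * ‖y - x'‖ ^ β / ‖y - x'‖ ^ s) * K x' y / ‖y - x'‖ ^ s) ≤
        g 1 * Lam * qg / pg * ε * r ^ ((β - s) * pg - s) / ((β - s) * pg - s) *
          ((n : ℝ) * (volume (ball (0 : Eucl n) 1)).toReal)) ∧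
    ∀ r : ℝ, 0 < r → r ≤ 1 →
      Tendsto (fun ε : ℝ =>
          ∫ y in ball x' r,
            g (ε * ‖y - x'‖ ^ β / ‖y - x'‖ ^ s) * K x' y / ‖y - x'‖ ^ s)
        (𝓝[>] 0) (𝓝 0) := by
  have : Nontrivial (Eucl n) :=
    Module.nontrivial_of_finrank_pos (R := ℝ) (by rw [finrank_euclideanSpace_fin]; omega)
  have hg0 : ∀ t, 0 ≤ t → 0 ≤ g t := fun t ht =>
    hzero ▸ hmono.monotoneOn (mem_Ici.2 le_rfl) ht ht
  have hsβ : s ≤ β := by linarith [div_pos hs0 (by linarith : (0 : ℝ) < pg)]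
  have ha : 0 < (β - s) * pg - s :=
    sub_pos.2 ((div_lt_iff₀ (by linarith)).1 (by linarith : s / pg < β - s))
  have hK : ∀ y, y ≠ x' → K x' y ≤ Lam / ‖y - x'‖ ^ Module.finrank ℝ (Eucl n) := fun y hy => by
    rw [finrank_euclideanSpace_fin, norm_sub_rev]
    exact hKupper x' y hy.symm
  have bound := fun ε r (hε : 0 < ε) (hε1 : ε ≤ 1) (hr : 0 ≤ r) (hr1 : r ≤ 1) =>
    setIntegral_test_function_le volume (fun _ => apply_le_apply_one_mul_rpow hdiff hlow) hg0
      hpg.le hsβ ha (hKpos x') hK hε hε1 hr hr1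
  have nonneg : ∀ ε r : ℝ, 0 < ε → 0 ≤ ∫ y in ball x' r,
      g (ε * ‖y - x'‖ ^ β / ‖y - x'‖ ^ s) * K x' y / ‖y - x'‖ ^ s := fun ε r hε =>
    setIntegral_nonneg measurableSet_ball fun y _ =>
      div_nonneg (mul_nonneg (hg0 _ (by positivity)) (hKpos x' y)) (by positivity)
  refine ⟨fun ε r hε hε1 hr hr1 => ?_, fun r hr hr1 => ?_⟩
  · calc _ ≤ _ := bound ε r hε hε1.le hr.le hr1
      _ ≤ qg / pg * _ :=
        le_mul_of_one_le_left ((nonneg ε r hε).trans (bound ε r hε hε1.le hr.le hr1))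
          ((one_le_div₀ (by linarith)).2 hpq)
      _ = _ := by rw [finrank_euclideanSpace_fin, measureReal_def]; ring
  · refine squeeze_zero' (eventually_nhdsWithin_of_forall fun ε hε => nonneg ε r hε)
      (eventually_of_mem (Ioo_mem_nhdsGT one_pos) fun ε hε =>
        bound ε r hε.1 hε.2.le hr.le hr1) ?_
    exact tendsto_nhdsWithin_of_tendsto_nhds (Continuous.tendsto' (by fun_prop) _ _ (by simp))

/-- estimate (3.6): smallness of the test-function
contribution.  For `g` satisfying condition (1.3), a kernel bounded by
`Λ|x−y|^{−n}`, and `β > s + s/p_g` (equivalently `β > sp/(p−1)` with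
`p = p_g + 1`), one has, for `0 < ε < 1` and `0 < r ≤ 1`,
`∫_{B_r(x̃)} g(ε|y−x̃|^β/|y−x̃|^s) K(x̃,y)|y−x̃|^{−s} dy ≤
 (g(1)Λq_g/p_g)·ε·r^{(β−s)p_g−s}/((β−s)p_g−s)·ω`, where `ω` is the surface
measure of the unit sphere in `ℝⁿ` (i.e. `n·|B₁|`); in particular this
integral tends to `0` as `ε → 0`. -/
theorem test_function_smallness
    (n : ℕ) (hn : 1 ≤ n) (s : ℝ) (hs0 : 0 < s) (hs1 : s < 1)
    (g : ℝ → ℝ) (pg qg : ℝ) (hpg : 1 < pg) (hpq : pg ≤ qg)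
    (hcont : ContinuousOn g (Ici 0)) (hmono : StrictMonoOn g (Ici 0))
    (hzero : g 0 = 0) (hinfty : Tendsto g atTop atTop)
    (hdiff : ∀ t : ℝ, 0 < t → DifferentiableAt ℝ g t)
    (hlow : ∀ t : ℝ, 0 < t → pg * g t ≤ t * deriv g t)
    (hupp : ∀ t : ℝ, 0 < t → t * deriv g t ≤ qg * g t)
    (x' : Eucl n) (Lam : ℝ) (hLam : 0 < Lam)
    (K : Eucl n → Eucl n → ℝ) (hKpos : ∀ x y, 0 ≤ K x y)
    (hKupper : ∀ x y : Eucl n, x ≠ y → K x y ≤ Lam / ‖x - y‖ ^ n)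
    (β : ℝ) (hβ : s + s / pg < β) :
    (∀ ε r : ℝ, 0 < ε → ε < 1 → 0 < r → r ≤ 1 →
      (∫ y in ball x' r,
          g (ε * ‖y - x'‖ ^ β / ‖y - x'‖ ^ s) * K x' y / ‖y - x'‖ ^ s) ≤
        g 1 * Lam * qg / pg * ε * r ^ ((β - s) * pg - s) / ((β - s) * pg - s) *
          ((n : ℝ) * (volume (ball (0 : Eucl n) 1)).toReal)) ∧
    ∀ r : ℝ, 0 < r → r ≤ 1 →
      Tendsto (fun ε : ℝ =>
          ∫ y in ball x' r,
            g (ε * ‖y - x'‖ ^ β / ‖y - x'‖ ^ s) * K x' y / ‖y - x'‖ ^ s)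
        (𝓝[>] 0) (𝓝 0) :=
  test_function_smallness_general n hn s hs0 g pg qg hpg hpq hmono hzero hdiff hlow x' Lam K hKpos
    hKupper β hβ
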